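/- arXiv:1005.3207 — 2 statements merged into one kernel-verified Lean document; each statement's English description precedes it below -/
import Mathlib

section
/- Fix z ∈ ℝ and integers 0 < r < n. With ρ = r/n, z(u) = (z − u√ρ)/√(1−ρ) and Δ(u,v) = Φ_{n−r}(z(u)) − Φ_{n−r}(z(v)) + p(z)(u − v)√ρ, the random variables Y_1, Y_2 defined below satisfy the identity E[Y_1 Y_2] = (1/2) ∫_ℝ ∫_ℝ Δ(u,v)² Φ_r(du) Φ_r(dv). -/
open MeasureTheory ProbabilityTheory Filter Finset
open scoped Topology Classical

/-- The standard Gaussian density `p(z) = (2π)^{-1/2} e^{-z²/2}`. -/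
noncomputable def stdGaussianDensity (z : ℝ) : ℝ :=
  (Real.sqrt (2 * Real.pi))⁻¹ * Real.exp (-z ^ 2 / 2)

/-- `PhiN μ n z` is the distribution function, evaluated at `z`, of
`(ξ₁ + ⋯ + ξₙ)/√n` for independent random variables `ξ₁, …, ξₙ` with common law `μ`. -/
noncomputable def PhiN (μ : Measure ℝ) [SigmaFinite μ] (n : ℕ) (z : ℝ) : ℝ :=
  ((Measure.pi fun _ : Fin n => μ) {x | (∑ i, x i) / Real.sqrt n ≤ z}).toReal

/-- The regularized indicator `Y = 1_{X ≤ z} - Φ_n(z) + p(z) X` associated to the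
normalized sum `X = n^{-1/2} ∑_{i ∈ s} ξ_i`. -/
noncomputable def regIndicator {Ω : Type*} (ξ : ℕ → Ω → ℝ) (μ : Measure ℝ)
    [SigmaFinite μ] (z : ℝ) (n : ℕ) (s : Finset ℕ) (ω : Ω) : ℝ :=
  (if (Real.sqrt n)⁻¹ * ∑ i ∈ s, ξ i ω ≤ z then (1 : ℝ) else 0) - PhiN μ n z +
    stdGaussianDensity z * ((Real.sqrt n)⁻¹ * ∑ i ∈ s, ξ i ω)

/-- The law of `(ξ₁ + ⋯ + ξₘ)/√m` for i.i.d. `ξ_i` with law `μ`: the probability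
measure on `ℝ` whose distribution function is `Φ_m`. -/
noncomputable def normalizedSumLaw (μ : Measure ℝ) [SigmaFinite μ] (m : ℕ) :
    Measure ℝ :=
  Measure.map (fun x : Fin m → ℝ => (∑ i, x i) / Real.sqrt m)
    (Measure.pi fun _ : Fin m => μ)

namespace CovAux

variable {μ : Measure ℝ}

lemma meas_sumdiv (m : ℕ) : Measurable fun x : Fin m → ℝ => (∑ i, x i) / Real.sqrt m :=
  (Finset.measurable_sum _ fun i _ => measurable_pi_apply i).div_const _

instance nuProb [IsProbabilityMeasure μ] (m : ℕ) :
    IsProbabilityMeasure (normalizedSumLaw μ m) :=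
  Measure.isProbabilityMeasure_map (meas_sumdiv m).aemeasurable

lemma measSet_sum (m : ℕ) (w : ℝ) :
    MeasurableSet {x : Fin m → ℝ | (∑ i, x i) / Real.sqrt m ≤ w} :=
  measurableSet_le (meas_sumdiv m) measurable_const

lemma integral_ite_le {τ : Measure ℝ} [IsFiniteMeasure τ] (w : ℝ) :
    ∫ x, (if x ≤ w then (1:ℝ) else 0) ∂τ = (τ (Set.Iic w)).toReal := by
  rw [← measureReal_def, ← integral_indicator_one measurableSet_Iic]
  congr 1

lemma nu_Iic [IsProbabilityMeasure μ] (m : ℕ) (w : ℝ) :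
    ((normalizedSumLaw μ m) (Set.Iic w)).toReal = PhiN μ m w := by
  rw [normalizedSumLaw, Measure.map_apply (meas_sumdiv m) measurableSet_Iic]
  rfl

lemma integral_ite_nu [IsProbabilityMeasure μ] (m : ℕ) (w : ℝ) :
    ∫ x, (if x ≤ w then (1:ℝ) else 0) ∂(normalizedSumLaw μ m) = PhiN μ m w := by
  haveI := nuProb (μ := μ) m
  rw [integral_ite_le, nu_Iic]

lemma PhiN_eq_integral [IsProbabilityMeasure μ] (m : ℕ) (w : ℝ) :
    PhiN μ m w = ∫ x, (if (∑ i, x i) / Real.sqrt m ≤ w then (1:ℝ) else 0)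
      ∂(Measure.pi fun _ : Fin m => μ) := by
  rw [PhiN, ← measureReal_def, ← integral_indicator_one (measSet_sum m w)]
  congr 1

lemma PhiN_nonneg (m : ℕ) (w : ℝ) [SigmaFinite μ] : 0 ≤ PhiN μ m w :=
  ENNReal.toReal_nonneg

lemma PhiN_le_one [IsProbabilityMeasure μ] (m : ℕ) (w : ℝ) : PhiN μ m w ≤ 1 := by
  rw [PhiN]
  exact ENNReal.toReal_le_of_le_ofReal zero_le_one (by simpa using prob_le_one)

lemma PhiN_mono [IsProbabilityMeasure μ] (m : ℕ) : Monotone (PhiN μ m) := by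
  intro w w' h
  refine ENNReal.toReal_mono (measure_ne_top _ _) (measure_mono ?_)
  exact fun x hx => le_trans hx h

lemma map_eval_pi [IsProbabilityMeasure μ] (m : ℕ) (i : Fin m) :
    Measure.map (fun x : Fin m → ℝ => x i) (Measure.pi fun _ : Fin m => μ) = μ := by
  refine Measure.ext fun s hs => ?_
  rw [Measure.map_apply (measurable_pi_apply i) hs]
  have hp : (fun x : Fin m → ℝ => x i) ⁻¹' s
      = Set.pi Set.univ (Function.update (fun _ : Fin m => Set.univ) i s) := by
    ext x
    simp only [Set.mem_preimage, Set.mem_univ_pi, Function.update_apply]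
    constructor
    · intro h j; split
      · next hji => subst hji; exact h
      · exact Set.mem_univ _
    · intro h; have := h i; simpa using this
  rw [hp, Measure.pi_pi]
  rw [Finset.prod_eq_single i (fun j _ hj => by simp [Function.update_apply, hj])
    (fun h => absurd (Finset.mem_univ i) h)]
  simp

lemma integrable_sq_mu (hvar : ∫ x, x ^ 2 ∂μ = 1) : Integrable (fun x : ℝ => x ^ 2) μ := by
  by_contra h
  rw [integral_undef h] at hvar
  norm_num at hvar

lemma memL2_id (hvar : ∫ x, x ^ 2 ∂μ = 1) : MemLp (fun x : ℝ => x) 2 μ :=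
  (memLp_two_iff_integrable_sq measurable_id'.aestronglyMeasurable).2 (integrable_sq_mu hvar)

lemma memL2_coord [IsProbabilityMeasure μ] (hvar : ∫ x, x ^ 2 ∂μ = 1) (m : ℕ) (i : Fin m) :
    MemLp (fun x : Fin m → ℝ => x i) 2 (Measure.pi fun _ : Fin m => μ) := by
  have h := memL2_id (μ := μ) hvar
  rw [← map_eval_pi (μ := μ) m i] at h
  exact (memLp_map_measure_iff measurable_id'.aestronglyMeasurable
    (measurable_pi_apply i).aemeasurable).1 h

lemma memL2_sumdiv [IsProbabilityMeasure μ] (hvar : ∫ x, x ^ 2 ∂μ = 1) (m : ℕ) :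
    MemLp (fun x : Fin m → ℝ => (∑ i, x i) / Real.sqrt m) 2
      (Measure.pi fun _ : Fin m => μ) := by
  have h : MemLp (fun x : Fin m → ℝ => ∑ i, x i) 2 (Measure.pi fun _ : Fin m => μ) := by
    have := memLp_finset_sum (μ := Measure.pi fun _ : Fin m => μ)
      (f := fun (i : Fin m) (x : Fin m → ℝ) => x i) Finset.univ
      (fun i _ => memL2_coord hvar m i)
    simpa using this
  have h2 := h.const_mul (Real.sqrt m)⁻¹
  have he : (fun x : Fin m → ℝ => (∑ i, x i) / Real.sqrt m)
      = fun x => (Real.sqrt m)⁻¹ * ∑ i, x i := funext fun x => div_eq_inv_mul _ _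
  rw [he]; exact h2

lemma memL2_id_nu [IsProbabilityMeasure μ] (hvar : ∫ x, x ^ 2 ∂μ = 1) (m : ℕ) :
    MemLp (fun u : ℝ => u) 2 (normalizedSumLaw μ m) := by
  rw [normalizedSumLaw]
  exact (memLp_map_measure_iff measurable_id'.aestronglyMeasurable
    (meas_sumdiv m).aemeasurable).2 (memL2_sumdiv hvar m)

lemma integrable_id_nu [IsProbabilityMeasure μ] (hvar : ∫ x, x ^ 2 ∂μ = 1) (m : ℕ) :
    Integrable (fun u : ℝ => u) (normalizedSumLaw μ m) :=
  (memL2_id_nu hvar m).integrable one_le_two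

lemma integrable_sq_nu [IsProbabilityMeasure μ] (hvar : ∫ x, x ^ 2 ∂μ = 1) (m : ℕ) :
    Integrable (fun u : ℝ => u ^ 2) (normalizedSumLaw μ m) :=
  (memL2_id_nu hvar m).integrable_sq

lemma integral_id_nu [IsProbabilityMeasure μ] (hmean : ∫ x, x ∂μ = 0)
    (hvar : ∫ x, x ^ 2 ∂μ = 1) (m : ℕ) :
    ∫ u, u ∂(normalizedSumLaw μ m) = 0 := by
  rw [normalizedSumLaw,
    integral_map (meas_sumdiv m).aemeasurable measurable_id'.aestronglyMeasurable]
  rw [integral_div, integral_finset_sum _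
    (fun i _ => (memL2_coord hvar m i).integrable one_le_two)]
  have : ∀ i : Fin m, ∫ x : Fin m → ℝ, x i ∂(Measure.pi fun _ : Fin m => μ) = 0 := by
    intro i
    have h := integral_map (μ := (Measure.pi fun _ : Fin m => μ))
      (φ := fun x : Fin m → ℝ => x i) (measurable_pi_apply i).aemeasurable
      (f := fun y : ℝ => y) ((map_eval_pi (μ := μ) m i).symm ▸ measurable_id'.aestronglyMeasurable)
    rw [map_eval_pi (μ := μ) m i] at h
    rw [← h]; exact hmean
  simp [this]


section Tuple

variable {Ω : Type*} [MeasurableSpace Ω] {P : Measure Ω} [IsProbabilityMeasure P]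
  {ξ : ℕ → Ω → ℝ}

lemma map_tuple [IsProbabilityMeasure μ] (hmeas : ∀ i, Measurable (ξ i))
    (hindep : iIndepFun ξ P)
    (hdist : ∀ i, Measure.map (ξ i) P = μ)
    (m : ℕ) (g : Fin m → ℕ) (hg : Function.Injective g) :
    Measure.map (fun ω (i : Fin m) => ξ (g i) ω) P = Measure.pi fun _ : Fin m => μ := by
  have hGmeas : Measurable fun ω (i : Fin m) => ξ (g i) ω :=
    measurable_pi_lambda _ fun i => hmeas (g i)
  refine (Measure.pi_eq fun s hs => ?_).symm
  rw [Measure.map_apply hGmeas (MeasurableSet.univ_pi hs)]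
  classical
  set sets : ℕ → Set ℝ := fun j => if h : ∃ i, g i = j then s h.choose else Set.univ with hsets
  have hsets_g : ∀ i : Fin m, sets (g i) = s i := by
    intro i
    have h : ∃ i', g i' = g i := ⟨i, rfl⟩
    simp only [hsets, dif_pos h]
    rw [hg h.choose_spec]
  have hpre : (fun ω (i : Fin m) => ξ (g i) ω) ⁻¹' Set.pi Set.univ s
      = ⋂ j ∈ Finset.image g Finset.univ, ξ j ⁻¹' sets j := by
    ext ω
    simp only [Set.mem_preimage, Set.mem_univ_pi, Set.mem_iInter, Finset.mem_image,
      Finset.mem_univ, true_and]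
    constructor
    · rintro h j ⟨i, rfl⟩
      rw [hsets_g i]; exact h i
    · intro h i
      have := h (g i) ⟨i, rfl⟩
      rwa [hsets_g i] at this
  rw [hpre]
  rw [hindep.measure_inter_preimage_eq_mul (Finset.image g Finset.univ) (sets := sets)
    (fun j _ => by
      simp only [hsets]
      split
      · exact hs _
      · exact MeasurableSet.univ)]
  rw [Finset.prod_image (fun i _ j _ h => hg h)]
  refine Finset.prod_congr rfl fun i _ => ?_
  rw [hsets_g i, ← hdist (g i), Measure.map_apply (hmeas (g i)) (hs i)]

lemma sum_Ico_eq_sum_fin (f : ℕ → ℝ) (c m : ℕ) :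
    ∑ i ∈ Finset.Ico c (c + m), f i = ∑ i : Fin m, f (c + (i : ℕ)) := by
  rw [Finset.sum_Ico_eq_sum_range]
  simp only [add_tsub_cancel_left]
  exact (Fin.sum_univ_eq_sum_range (fun i => f (c + i)) m).symm

lemma map_blocksum [IsProbabilityMeasure μ] (hmeas : ∀ i, Measurable (ξ i))
    (hindep : iIndepFun ξ P)
    (hdist : ∀ i, Measure.map (ξ i) P = μ) (c m : ℕ) :
    Measure.map (fun ω => (∑ i ∈ Finset.Ico c (c + m), ξ i ω) / Real.sqrt m) P
      = normalizedSumLaw μ m := by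
  have hg : Function.Injective fun i : Fin m => c + (i : ℕ) := fun i j h =>
    Fin.ext (Nat.add_left_cancel h)
  have h := map_tuple hmeas hindep hdist m (fun i => c + (i : ℕ)) hg
  have hGmeas : Measurable fun ω (i : Fin m) => ξ (c + (i : ℕ)) ω :=
    measurable_pi_lambda _ fun i => hmeas _
  rw [normalizedSumLaw, ← h, Measure.map_map (meas_sumdiv m) hGmeas]
  congr 1
  funext ω
  simp only [Function.comp]
  rw [sum_Ico_eq_sum_fin]

lemma sum_coe_filter (T s : Finset ℕ) (hsub : s ⊆ T) (f : ℕ → ℝ) :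
    (∑ i : {x // x ∈ T}, if (i : ℕ) ∈ s then f i else 0) = ∑ i ∈ s, f i := by
  rw [Finset.sum_coe_sort T (fun i => if i ∈ s then f i else 0)]
  rw [← Finset.sum_filter]
  rw [Finset.filter_mem_eq_inter, Finset.inter_eq_right.mpr hsub]

lemma indep_blocksum (hmeas : ∀ i, Measurable (ξ i))
    (hindep : iIndepFun ξ P)
    {s t : Finset ℕ} (hst : Disjoint s t) (ca cb : ℝ) :
    IndepFun (fun ω => (∑ i ∈ s, ξ i ω) / ca) (fun ω => (∑ i ∈ t, ξ i ω) / cb) P := by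
  have h := hindep.indepFun_finset s t hst hmeas
  have h2 := h.comp (φ := fun v : {x // x ∈ s} → ℝ => (∑ i, v i) / ca)
    (ψ := fun v : {x // x ∈ t} → ℝ => (∑ i, v i) / cb)
    ((Finset.measurable_sum _ fun i _ => measurable_pi_apply i).div_const _)
    ((Finset.measurable_sum _ fun i _ => measurable_pi_apply i).div_const _)
  have e1 : ((fun v : {x // x ∈ s} → ℝ => (∑ i, v i) / ca) ∘ fun a (i : {x // x ∈ s}) => ξ i a)
      = fun ω => (∑ i ∈ s, ξ i ω) / ca := by
    funext ω; simp only [Function.comp]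
    rw [Finset.sum_coe_sort s (fun i => ξ i ω)]
  have e2 : ((fun v : {x // x ∈ t} → ℝ => (∑ i, v i) / cb) ∘ fun a (i : {x // x ∈ t}) => ξ i a)
      = fun ω => (∑ i ∈ t, ξ i ω) / cb := by
    funext ω; simp only [Function.comp]
    rw [Finset.sum_coe_sort t (fun i => ξ i ω)]
  rwa [e1, e2] at h2

lemma indep_blocksum_pair (hmeas : ∀ i, Measurable (ξ i))
    (hindep : iIndepFun ξ P)
    {s t₁ t₂ : Finset ℕ} (h1 : Disjoint s t₁) (h2 : Disjoint s t₂)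
    (ca c₁ c₂ : ℝ) :
    IndepFun (fun ω => (∑ i ∈ s, ξ i ω) / ca)
      (fun ω => ((∑ i ∈ t₁, ξ i ω) / c₁, (∑ i ∈ t₂, ξ i ω) / c₂)) P := by
  classical
  set T := t₁ ∪ t₂ with hT
  have hsT : Disjoint s T := by
    rw [hT, Finset.disjoint_union_right]; exact ⟨h1, h2⟩
  have h := hindep.indepFun_finset s T hsT hmeas
  have hm1 : Measurable fun v : {x // x ∈ T} → ℝ =>
      ((∑ i : {x // x ∈ T}, if (i : ℕ) ∈ t₁ then v i else 0) / c₁,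
       (∑ i : {x // x ∈ T}, if (i : ℕ) ∈ t₂ then v i else 0) / c₂) := by
    refine Measurable.prod ?_ ?_ <;>
      exact (Finset.measurable_sum _ fun i _ => by
        split
        · exact measurable_pi_apply i
        · exact measurable_const).div_const _
  have h2' := h.comp (φ := fun v : {x // x ∈ s} → ℝ => (∑ i, v i) / ca)
    ((Finset.measurable_sum _ fun i _ => measurable_pi_apply i).div_const _) hm1
  have e1 : ((fun v : {x // x ∈ s} → ℝ => (∑ i, v i) / ca) ∘ fun a (i : {x // x ∈ s}) => ξ i a)
      = fun ω => (∑ i ∈ s, ξ i ω) / ca := by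
    funext ω; simp only [Function.comp]
    rw [Finset.sum_coe_sort s (fun i => ξ i ω)]
  have e2 : ((fun v : {x // x ∈ T} → ℝ =>
      ((∑ i : {x // x ∈ T}, if (i : ℕ) ∈ t₁ then v i else 0) / c₁,
       (∑ i : {x // x ∈ T}, if (i : ℕ) ∈ t₂ then v i else 0) / c₂)) ∘ fun a (i : {x // x ∈ T}) => ξ i a)
      = fun ω => ((∑ i ∈ t₁, ξ i ω) / c₁, (∑ i ∈ t₂, ξ i ω) / c₂) := by
    funext ω; simp only [Function.comp]
    rw [sum_coe_filter T t₁ Finset.subset_union_left (fun i => ξ i ω),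
      sum_coe_filter T t₂ Finset.subset_union_right (fun i => ξ i ω)]
  rwa [e1, e2] at h2'

end Tuple


lemma integrable_bdd {α : Type*} [MeasurableSpace α] {τ : Measure α} [IsFiniteMeasure τ]
    {f : α → ℝ} (hf : AEStronglyMeasurable f τ) (C : ℝ) (h : ∀ x, |f x| ≤ C) :
    Integrable f τ :=
  Integrable.mono' (integrable_const C) hf
    (Filter.Eventually.of_forall fun x => by simpa [Real.norm_eq_abs] using h x)

lemma phi_convolution [IsProbabilityMeasure μ] (r κ : ℕ) (hr : 0 < r) (hκ : 0 < κ) (z : ℝ) :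
    ∫ t, PhiN μ κ ((z * Real.sqrt (r + κ : ℕ) - Real.sqrt r * t) / Real.sqrt κ)
        ∂(normalizedSumLaw μ r)
      = PhiN μ (r + κ) z := by
  have hsn : (0:ℝ) < Real.sqrt (r + κ : ℕ) :=
    Real.sqrt_pos.mpr (by exact_mod_cast Nat.add_pos_left hr κ)
  have hsκ : (0:ℝ) < Real.sqrt κ := Real.sqrt_pos.mpr (by exact_mod_cast hκ)
  have hsr : (0:ℝ) < Real.sqrt r := Real.sqrt_pos.mpr (by exact_mod_cast hr)
  set f : Fin r ⊕ Fin κ ≃ Fin (r + κ) := finSumFinEquiv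
  set Θ : (Fin (r + κ) → ℝ) ≃ᵐ (Fin r → ℝ) × (Fin κ → ℝ) :=
    (MeasurableEquiv.piCongrLeft (fun _ : Fin (r + κ) => ℝ) f).symm.trans
      (MeasurableEquiv.sumPiEquivProdPi fun _ => ℝ) with hΘdef
  have hΘ : MeasurePreserving Θ (Measure.pi fun _ : Fin (r + κ) => μ)
      ((Measure.pi fun _ : Fin r => μ).prod (Measure.pi fun _ : Fin κ => μ)) := by
    have h1 := (measurePreserving_piCongrLeft (fun _ : Fin (r + κ) => μ) f).symm
      (MeasurableEquiv.piCongrLeft (fun _ : Fin (r + κ) => ℝ) f)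
    have h2 := measurePreserving_sumPiEquivProdPi (fun _ : Fin r ⊕ Fin κ => μ)
    exact h2.comp h1
  have hΘapp : ∀ x : Fin (r + κ) → ℝ,
      Θ x = (fun i : Fin r => x (f (Sum.inl i)), fun j : Fin κ => x (f (Sum.inr j))) := by
    intro x
    rfl
  have hsum_eq : ∀ x : Fin (r + κ) → ℝ,
      ∑ i, x i = (∑ i : Fin r, x (f (Sum.inl i))) + ∑ j : Fin κ, x (f (Sum.inr j)) := by
    intro x
    rw [← Equiv.sum_comp f (fun i => x i), Fintype.sum_sum_type]
  set g : (Fin r → ℝ) × (Fin κ → ℝ) → ℝ := fun p =>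
    if ((∑ i, p.1 i) + ∑ j, p.2 j) / Real.sqrt (r + κ : ℕ) ≤ z then (1:ℝ) else 0 with hgdef
  have hgmeas : Measurable g := by
    refine Measurable.ite (measurableSet_le ?_ measurable_const) measurable_const
      measurable_const
    exact ((Finset.measurable_sum _ fun i _ => (measurable_pi_apply i).comp measurable_fst).add
      (Finset.measurable_sum _ fun j _ => (measurable_pi_apply j).comp measurable_snd)).div_const _
  have key1 : PhiN μ (r + κ) z = ∫ p, g p
      ∂((Measure.pi fun _ : Fin r => μ).prod (Measure.pi fun _ : Fin κ => μ)) := by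
    rw [PhiN_eq_integral (r + κ) z, ← hΘ.integral_comp' g]
    congr 1
    funext x
    rw [hΘapp x, hgdef]
    simp only
    rw [← hsum_eq x]
  rw [key1]
  have hgint : Integrable g
      ((Measure.pi fun _ : Fin r => μ).prod (Measure.pi fun _ : Fin κ => μ)) := by
    refine integrable_bdd hgmeas.aestronglyMeasurable 1 fun p => ?_
    rw [hgdef]; simp only
    split <;> simp
  rw [integral_prod g hgint]
  refine Eq.symm ?_
  have hinner : ∀ u : Fin r → ℝ,
      ∫ a, g (u, a) ∂(Measure.pi fun _ : Fin κ => μ)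
        = PhiN μ κ ((z * Real.sqrt (r + κ : ℕ) - ∑ i, u i) / Real.sqrt κ) := by
    intro u
    rw [PhiN_eq_integral κ _]
    congr 1
    funext a
    rw [hgdef]
    simp only
    refine if_congr ?_ rfl rfl
    rw [div_le_iff₀ hsn, div_le_div_iff₀ hsκ hsκ]
    constructor <;> intro h <;> nlinarith
  have hmeas_inner : Measurable fun t : ℝ =>
      PhiN μ κ ((z * Real.sqrt (r + κ : ℕ) - Real.sqrt r * t) / Real.sqrt κ) := by
    refine (PhiN_mono κ).measurable.comp ?_
    fun_prop
  calc ∫ u, ∫ a, g (u, a) ∂(Measure.pi fun _ : Fin κ => μ) ∂(Measure.pi fun _ : Fin r => μ)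
      = ∫ u, PhiN μ κ ((z * Real.sqrt (r + κ : ℕ) - ∑ i, u i) / Real.sqrt κ)
          ∂(Measure.pi fun _ : Fin r => μ) := by
        exact integral_congr_ae (Filter.Eventually.of_forall fun u => hinner u)
    _ = ∫ t, PhiN μ κ ((z * Real.sqrt (r + κ : ℕ) - Real.sqrt r * t) / Real.sqrt κ)
          ∂(normalizedSumLaw μ r) := by
        rw [normalizedSumLaw, integral_map (meas_sumdiv r).aemeasurable
          hmeas_inner.aestronglyMeasurable]
        congr 1
        funext u
        rw [mul_comm (Real.sqrt r), div_mul_cancel₀ _ hsr.ne']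

lemma inner_int [IsProbabilityMeasure μ] (hmean : ∫ x, x ∂μ = 0)
    (hvar : ∫ x, x ^ 2 ∂μ = 1) (n κ r : ℕ) (hκ : 0 < κ) (hn : 0 < n) (z t pz : ℝ) :
    ∫ a, ((if (Real.sqrt κ * a + Real.sqrt r * t) / Real.sqrt n ≤ z then (1:ℝ) else 0)
        - PhiN μ n z + pz * ((Real.sqrt κ * a + Real.sqrt r * t) / Real.sqrt n))
        ∂(normalizedSumLaw μ κ)
      = PhiN μ κ ((z * Real.sqrt n - Real.sqrt r * t) / Real.sqrt κ) - PhiN μ n z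
        + pz * (Real.sqrt r * t / Real.sqrt n) := by
  haveI := nuProb (μ := μ) κ
  have hsκ : (0:ℝ) < Real.sqrt κ := Real.sqrt_pos.mpr (by exact_mod_cast hκ)
  have hsn : (0:ℝ) < Real.sqrt n := Real.sqrt_pos.mpr (by exact_mod_cast hn)
  set w : ℝ := (z * Real.sqrt n - Real.sqrt r * t) / Real.sqrt κ with hw
  have hiff : ∀ a : ℝ, ((Real.sqrt κ * a + Real.sqrt r * t) / Real.sqrt n ≤ z ↔ a ≤ w) := by
    intro a
    rw [hw, div_le_iff₀ hsn, le_div_iff₀ hsκ]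
    constructor <;> intro h <;> nlinarith
  have e : (fun a : ℝ => (if (Real.sqrt κ * a + Real.sqrt r * t) / Real.sqrt n ≤ z
        then (1:ℝ) else 0) - PhiN μ n z
        + pz * ((Real.sqrt κ * a + Real.sqrt r * t) / Real.sqrt n))
      = fun a => (if a ≤ w then (1:ℝ) else 0)
        + ((pz * Real.sqrt κ / Real.sqrt n) * a
            + (pz * (Real.sqrt r * t / Real.sqrt n) - PhiN μ n z)) := by
    funext a
    rw [if_congr (hiff a) rfl rfl]
    ring
  rw [e]
  have h1 : Integrable (fun a : ℝ => (if a ≤ w then (1:ℝ) else 0)) (normalizedSumLaw μ κ) := by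
    refine integrable_bdd ?_ 1 fun x => by split <;> simp
    exact (Measurable.ite measurableSet_Iic measurable_const
      measurable_const).aestronglyMeasurable
  have h2 : Integrable (fun a : ℝ => (pz * Real.sqrt κ / Real.sqrt n) * a
      + (pz * (Real.sqrt r * t / Real.sqrt n) - PhiN μ n z)) (normalizedSumLaw μ κ) :=
    ((integrable_id_nu hvar κ).const_mul _).add (integrable_const _)
  rw [integral_add h1 h2, integral_ite_nu κ w, integral_add
    ((integrable_id_nu hvar κ).const_mul _) (integrable_const _), integral_const_mul _ _,
    integral_id_nu hmean hvar κ, integral_const]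
  simp only [measure_univ, ENNReal.toReal_one, probReal_univ, one_smul, mul_zero, zero_add]
  ring

lemma arg_eq (n r : ℕ) (hr : 0 < r) (hrn : r < n) (z u : ℝ) :
    (z - u * Real.sqrt ((r:ℝ)/n)) / Real.sqrt (1 - (r:ℝ)/n)
      = (z * Real.sqrt n - Real.sqrt r * u) / Real.sqrt ((n - r : ℕ) : ℝ) := by
  have hn : (0:ℝ) < n := by exact_mod_cast hr.trans hrn
  have hrn' : (r:ℝ) < n := by exact_mod_cast hrn
  have hc : ((n - r : ℕ) : ℝ) = (n:ℝ) - r := by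
    rw [Nat.cast_sub hrn.le]
  rw [hc]
  have h1 : (1:ℝ) - (r:ℝ)/n = ((n:ℝ) - r)/n := by field_simp
  rw [h1, Real.sqrt_div (by linarith : (0:ℝ) ≤ (n:ℝ) - r),
    Real.sqrt_div (by positivity : (0:ℝ) ≤ (r:ℝ))]
  have hsn : (0:ℝ) < Real.sqrt n := Real.sqrt_pos.mpr hn
  have hsnr : (0:ℝ) < Real.sqrt ((n:ℝ) - r) := Real.sqrt_pos.mpr (by linarith)
  field_simp

end CovAux

set_option maxHeartbeats 3000000 in
/-- **Main lemma: the covariance identity.**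
Let `ξ₁, ξ₂, …` be i.i.d. with mean `0` and variance `1`, fix `z ∈ ℝ` and `0 < r < n`.
Let `X₁ = n^{-1/2} ∑_{i=1}^n ξ_i` and `X₂ = n^{-1/2} ∑_{i=n-r+1}^{2n-r} ξ_i`
(two normalized sums sharing exactly `r` summands), and set
`Y_j = 1_{X_j ≤ z} - Φ_n(z) + p(z) X_j`. With `ρ = r/n`, `z(u) = (z - u√ρ)/√(1-ρ)` and
`Δ(u,v) = Φ_{n-r}(z(u)) - Φ_{n-r}(z(v)) + p(z)(u - v)√ρ`, one has
`E[Y₁ Y₂] = (1/2) ∬ Δ(u,v)² Φ_r(du) Φ_r(dv)`. -/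
theorem main_lemma_covariance_identity
    {Ω : Type*} [MeasurableSpace Ω] (P : Measure Ω) [IsProbabilityMeasure P]
    (μ : Measure ℝ) [IsProbabilityMeasure μ]
    (hmean : ∫ x, x ∂μ = 0) (hvar : ∫ x, x ^ 2 ∂μ = 1)
    (ξ : ℕ → Ω → ℝ)
    (hmeas : ∀ i, Measurable (ξ i))
    (hindep : iIndepFun ξ P)
    (hdist : ∀ i, Measure.map (ξ i) P = μ)
    (z : ℝ) (r n : ℕ) (hr : 0 < r) (hrn : r < n) :
    ∫ ω, regIndicator ξ μ z n (Finset.range n) ω *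
        regIndicator ξ μ z n (Finset.Ico (n - r) (2 * n - r)) ω ∂P =
      (1 / 2) * ∫ u, ∫ v,
        (PhiN μ (n - r) ((z - u * Real.sqrt ((r : ℝ) / n)) /
            Real.sqrt (1 - (r : ℝ) / n)) -
          PhiN μ (n - r) ((z - v * Real.sqrt ((r : ℝ) / n)) /
            Real.sqrt (1 - (r : ℝ) / n)) +
          stdGaussianDensity z * (u - v) * Real.sqrt ((r : ℝ) / n)) ^ 2
        ∂(normalizedSumLaw μ r) ∂(normalizedSumLaw μ r) := by
  classical
  set pz := stdGaussianDensity z with hpz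
  set κ := n - r with hκdef
  have hκ : 0 < κ := by omega
  have hκn : κ ≤ n := by omega
  have hrκ : r + κ = n := by omega
  have hn : 0 < n := by omega
  have hnκ2 : n + κ = 2 * n - r := by omega
  have hsn : (0:ℝ) < Real.sqrt n := Real.sqrt_pos.mpr (by exact_mod_cast hn)
  have hsκ : (0:ℝ) < Real.sqrt κ := Real.sqrt_pos.mpr (by exact_mod_cast hκ)
  have hsr : (0:ℝ) < Real.sqrt r := Real.sqrt_pos.mpr (by exact_mod_cast hr)
  haveI := CovAux.nuProb (μ := μ) r
  haveI := CovAux.nuProb (μ := μ) κ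
  set A : Ω → ℝ := fun ω => (∑ i ∈ Finset.Ico 0 κ, ξ i ω) / Real.sqrt κ with hA
  set B : Ω → ℝ := fun ω => (∑ i ∈ Finset.Ico κ n, ξ i ω) / Real.sqrt r with hB
  set C : Ω → ℝ := fun ω => (∑ i ∈ Finset.Ico n (2 * n - r), ξ i ω) / Real.sqrt κ with hC
  set F : ℝ → ℝ → ℝ := fun a b =>
    (if (Real.sqrt κ * a + Real.sqrt r * b) / Real.sqrt n ≤ z then (1:ℝ) else 0)
      - PhiN μ n z + pz * ((Real.sqrt κ * a + Real.sqrt r * b) / Real.sqrt n) with hF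
  set H : ℝ → ℝ := fun t =>
    PhiN μ κ ((z * Real.sqrt n - Real.sqrt r * t) / Real.sqrt κ) - PhiN μ n z
      + pz * (Real.sqrt r * t / Real.sqrt n) with hH
  -- measurability of the blocks
  have hAmeas : Measurable A := (Finset.measurable_sum _ fun i _ => hmeas i).div_const _
  have hBmeas : Measurable B := (Finset.measurable_sum _ fun i _ => hmeas i).div_const _
  have hCmeas : Measurable C := (Finset.measurable_sum _ fun i _ => hmeas i).div_const _
  -- rewriting the two regularized indicators
  have hsplit1 : ∀ ω, (∑ i ∈ Finset.range n, ξ i ω)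
      = Real.sqrt κ * A ω + Real.sqrt r * B ω := by
    intro ω
    have hs : ∑ i ∈ Finset.range n, ξ i ω
        = (∑ i ∈ Finset.Ico 0 κ, ξ i ω) + ∑ i ∈ Finset.Ico κ n, ξ i ω := by
      rw [Finset.range_eq_Ico, Finset.sum_Ico_consecutive _ (Nat.zero_le κ) hκn]
    rw [hs, hA, hB]
    simp only
    field_simp
  have hsplit2 : ∀ ω, (∑ i ∈ Finset.Ico κ (2 * n - r), ξ i ω)
      = Real.sqrt κ * C ω + Real.sqrt r * B ω := by
    intro ω
    have hs : ∑ i ∈ Finset.Ico κ (2 * n - r), ξ i ω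
        = (∑ i ∈ Finset.Ico κ n, ξ i ω) + ∑ i ∈ Finset.Ico n (2 * n - r), ξ i ω := by
      rw [Finset.sum_Ico_consecutive _ hκn (by omega)]
    rw [hs, hB, hC]
    simp only
    field_simp
    ring
  have hreg1 : ∀ ω, regIndicator ξ μ z n (Finset.range n) ω = F (A ω) (B ω) := by
    intro ω
    simp only [regIndicator, hF]
    rw [hsplit1 ω, inv_mul_eq_div, ← hpz]
  have hreg2 : ∀ ω, regIndicator ξ μ z n (Finset.Ico κ (2 * n - r)) ω = F (C ω) (B ω) := by
    intro ω
    simp only [regIndicator, hF]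
    rw [hsplit2 ω, inv_mul_eq_div, ← hpz]
  -- laws of the blocks
  have hlawA : Measure.map A P = normalizedSumLaw μ κ := by
    have h := CovAux.map_blocksum (μ := μ) hmeas hindep hdist 0 κ
    rw [Nat.zero_add] at h
    rw [hA]; exact h
  have hlawB : Measure.map B P = normalizedSumLaw μ r := by
    have h := CovAux.map_blocksum (μ := μ) hmeas hindep hdist κ r
    rw [show κ + r = n by omega] at h
    rw [hB]; exact h
  have hlawC : Measure.map C P = normalizedSumLaw μ κ := by
    have h := CovAux.map_blocksum (μ := μ) hmeas hindep hdist n κ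
    rw [hnκ2] at h
    rw [hC]; exact h
  -- independence and the joint law
  have hdisj1 : Disjoint (Finset.Ico κ n) (Finset.Ico 0 κ) := by
    refine Finset.disjoint_left.mpr fun a ha hb => ?_
    simp only [Finset.mem_Ico] at ha hb; omega
  have hdisj2 : Disjoint (Finset.Ico κ n) (Finset.Ico n (2 * n - r)) := by
    refine Finset.disjoint_left.mpr fun a ha hb => ?_
    simp only [Finset.mem_Ico] at ha hb; omega
  have hdisj3 : Disjoint (Finset.Ico 0 κ) (Finset.Ico n (2 * n - r)) := by
    refine Finset.disjoint_left.mpr fun a ha hb => ?_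
    simp only [Finset.mem_Ico] at ha hb; omega
  have hindepBAC : IndepFun B (fun ω => (A ω, C ω)) P := by
    have h := CovAux.indep_blocksum_pair (P := P) (ξ := ξ) hmeas hindep hdisj1 hdisj2
      (Real.sqrt r) (Real.sqrt κ) (Real.sqrt κ)
    rw [hA, hB, hC]; exact h
  have hindepAC : IndepFun A C P := by
    have h := CovAux.indep_blocksum (P := P) (ξ := ξ) hmeas hindep hdisj3
      (Real.sqrt κ) (Real.sqrt κ)
    rw [hA, hC]; exact h
  have hjoint : Measure.map (fun ω => (B ω, (A ω, C ω))) P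
      = (normalizedSumLaw μ r).prod
          ((normalizedSumLaw μ κ).prod (normalizedSumLaw μ κ)) := by
    rw [(ProbabilityTheory.indepFun_iff_map_prod_eq_prod_map_map hBmeas.aemeasurable
      (hAmeas.prodMk hCmeas).aemeasurable).1 hindepBAC]
    rw [(ProbabilityTheory.indepFun_iff_map_prod_eq_prod_map_map hAmeas.aemeasurable
      hCmeas.aemeasurable).1 hindepAC]
    rw [hlawA, hlawB, hlawC]
  -- the product integrand
  set G : ℝ × (ℝ × ℝ) → ℝ := fun p => F p.2.1 p.1 * F p.2.2 p.1 with hG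
  have hFmeas : Measurable (fun p : ℝ × ℝ => F p.1 p.2) := by
    rw [hF]
    have hset : MeasurableSet {p : ℝ × ℝ |
        (Real.sqrt κ * p.1 + Real.sqrt r * p.2) / Real.sqrt n ≤ z} :=
      measurableSet_le (by fun_prop) measurable_const
    exact ((Measurable.ite hset measurable_const measurable_const).sub
      measurable_const).add (measurable_const.mul (by fun_prop))
  have hGmeas : Measurable G := by
    rw [hG]
    exact (hFmeas.comp (measurable_snd.fst.prodMk measurable_fst)).mul
      (hFmeas.comp (measurable_snd.snd.prodMk measurable_fst))
  -- integrability of G on the product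
  set c1 : ℝ := |pz| * Real.sqrt κ / Real.sqrt n with hc1
  set c2 : ℝ := |pz| * Real.sqrt r / Real.sqrt n with hc2
  have hFbound : ∀ a b, |F a b| ≤ 2 + c1 * |a| + c2 * |b| := by
    intro a b
    rw [hF]; simp only
    have h0 : |(if (Real.sqrt κ * a + Real.sqrt r * b) / Real.sqrt n ≤ z
        then (1:ℝ) else 0)| ≤ 1 := by split <;> simp
    have h1 : |PhiN μ n z| ≤ 1 := abs_le.mpr
      ⟨by linarith [CovAux.PhiN_nonneg (μ := μ) n z], CovAux.PhiN_le_one n z⟩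
    have h2 : |pz * ((Real.sqrt κ * a + Real.sqrt r * b) / Real.sqrt n)|
        ≤ c1 * |a| + c2 * |b| := by
      rw [abs_mul, abs_div, abs_of_pos hsn]
      have htri : |Real.sqrt κ * a + Real.sqrt r * b|
          ≤ Real.sqrt κ * |a| + Real.sqrt r * |b| :=
        (abs_add_le _ _).trans (by rw [abs_mul, abs_mul, abs_of_pos hsκ, abs_of_pos hsr])
      calc |pz| * (|Real.sqrt κ * a + Real.sqrt r * b| / Real.sqrt n)
          ≤ |pz| * ((Real.sqrt κ * |a| + Real.sqrt r * |b|) / Real.sqrt n) := by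
            apply mul_le_mul_of_nonneg_left _ (abs_nonneg _)
            exact (div_le_div_iff_of_pos_right hsn).mpr htri
        _ = c1 * |a| + c2 * |b| := by rw [hc1, hc2]; ring
    calc |(if (Real.sqrt κ * a + Real.sqrt r * b) / Real.sqrt n ≤ z then (1:ℝ) else 0)
          - PhiN μ n z + pz * ((Real.sqrt κ * a + Real.sqrt r * b) / Real.sqrt n)|
        ≤ |(if (Real.sqrt κ * a + Real.sqrt r * b) / Real.sqrt n ≤ z then (1:ℝ) else 0)
          - PhiN μ n z| + |pz * ((Real.sqrt κ * a + Real.sqrt r * b) / Real.sqrt n)| :=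
          abs_add_le _ _
      _ ≤ (|(if (Real.sqrt κ * a + Real.sqrt r * b) / Real.sqrt n ≤ z then (1:ℝ) else 0)|
          + |PhiN μ n z|) + |pz * ((Real.sqrt κ * a + Real.sqrt r * b) / Real.sqrt n)| := by
          have := abs_sub (if (Real.sqrt κ * a + Real.sqrt r * b) / Real.sqrt n ≤ z
            then (1:ℝ) else 0) (PhiN μ n z)
          linarith
      _ ≤ 2 + c1 * |a| + c2 * |b| := by linarith
  set D : ℝ × (ℝ × ℝ) → ℝ := fun p =>
    12 + (3/2 * c1^2) * p.2.1^2 + (3/2 * c1^2) * p.2.2^2 + (3 * c2^2) * p.1^2 with hD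
  have hDint : Integrable D
      ((normalizedSumLaw μ r).prod
        ((normalizedSumLaw μ κ).prod (normalizedSumLaw μ κ))) := by
    have hint1 : Integrable (fun p : ℝ × (ℝ × ℝ) => p.1^2)
        ((normalizedSumLaw μ r).prod
          ((normalizedSumLaw μ κ).prod (normalizedSumLaw μ κ))) := by
      have h := (CovAux.integrable_sq_nu (μ := μ) hvar r).mul_prod
        (integrable_const (1:ℝ) (μ := (normalizedSumLaw μ κ).prod (normalizedSumLaw μ κ)))
      simpa using h
    have hinner1 : Integrable (fun q : ℝ × ℝ => q.1^2)
        ((normalizedSumLaw μ κ).prod (normalizedSumLaw μ κ)) := by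
      have h := (CovAux.integrable_sq_nu (μ := μ) hvar κ).mul_prod
        (integrable_const (1:ℝ) (μ := normalizedSumLaw μ κ))
      simpa using h
    have hinner2 : Integrable (fun q : ℝ × ℝ => q.2^2)
        ((normalizedSumLaw μ κ).prod (normalizedSumLaw μ κ)) := by
      have h := (integrable_const (1:ℝ) (μ := normalizedSumLaw μ κ)).mul_prod
        (CovAux.integrable_sq_nu (μ := μ) hvar κ)
      simpa using h
    have hint2 : Integrable (fun p : ℝ × (ℝ × ℝ) => p.2.1^2)
        ((normalizedSumLaw μ r).prod
          ((normalizedSumLaw μ κ).prod (normalizedSumLaw μ κ))) := by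
      have h := (integrable_const (1:ℝ) (μ := normalizedSumLaw μ r)).mul_prod hinner1
      simpa using h
    have hint3 : Integrable (fun p : ℝ × (ℝ × ℝ) => p.2.2^2)
        ((normalizedSumLaw μ r).prod
          ((normalizedSumLaw μ κ).prod (normalizedSumLaw μ κ))) := by
      have h := (integrable_const (1:ℝ) (μ := normalizedSumLaw μ r)).mul_prod hinner2
      simpa using h
    rw [hD]
    exact (((integrable_const 12).add (hint2.const_mul _)).add
      (hint3.const_mul _)).add (hint1.const_mul _)
  have hGbound : ∀ p : ℝ × (ℝ × ℝ), ‖G p‖ ≤ D p := by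
    intro p
    rw [hG, hD]; simp only [Real.norm_eq_abs]
    obtain ⟨b, a, c⟩ := p
    simp only
    rw [abs_mul]
    have hab := hFbound a b
    have hcb := hFbound c b
    have hprod := mul_le_mul hab hcb (abs_nonneg _) (by positivity)
    nlinarith [sq_nonneg (c1*|a| - c1*|c|), sq_nonneg (c1*|a| - c2*|b|),
      sq_nonneg (c1*|c| - c2*|b|), sq_nonneg (c1*|a| - 2), sq_nonneg (c1*|c| - 2),
      sq_nonneg (c2*|b| - 2), sq_abs a, sq_abs b, sq_abs c, abs_nonneg a, abs_nonneg b,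
      abs_nonneg c, abs_nonneg (F a b), abs_nonneg (F c b)]
  have hGint : Integrable G
      ((normalizedSumLaw μ r).prod
        ((normalizedSumLaw μ κ).prod (normalizedSumLaw μ κ))) :=
    Integrable.mono' hDint hGmeas.aestronglyMeasurable
      (Filter.Eventually.of_forall hGbound)
  -- the LHS computation
  have hIN : ∀ b : ℝ, ∫ a, F a b ∂(normalizedSumLaw μ κ) = H b := by
    intro b
    rw [hF, hH]
    exact CovAux.inner_int hmean hvar n κ r hκ hn z b pz
  have lhs_eq : ∫ ω, regIndicator ξ μ z n (Finset.range n) ω *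
      regIndicator ξ μ z n (Finset.Ico κ (2 * n - r)) ω ∂P
      = ∫ t, H t * H t ∂(normalizedSumLaw μ r) := by
    have e1 : ∫ ω, regIndicator ξ μ z n (Finset.range n) ω *
        regIndicator ξ μ z n (Finset.Ico κ (2 * n - r)) ω ∂P
        = ∫ p, G p ∂(Measure.map (fun ω => (B ω, (A ω, C ω))) P) := by
      rw [integral_map ((hBmeas.prodMk (hAmeas.prodMk hCmeas)).aemeasurable)
        hGmeas.aestronglyMeasurable]
      refine integral_congr_ae (Filter.Eventually.of_forall fun ω => ?_)
      simp only [hreg1, hreg2, hG]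
    rw [e1, hjoint, integral_prod G hGint]
    refine integral_congr_ae (Filter.Eventually.of_forall fun b => ?_)
    show (∫ q, G (b, q) ∂((normalizedSumLaw μ κ).prod (normalizedSumLaw μ κ))) = H b * H b
    have e2 : ∫ q, G (b, q) ∂((normalizedSumLaw μ κ).prod (normalizedSumLaw μ κ))
        = (∫ a, F a b ∂(normalizedSumLaw μ κ)) * ∫ c, F c b ∂(normalizedSumLaw μ κ) := by
      rw [hG]
      exact integral_prod_mul (fun a => F a b) (fun c => F c b)
    rw [e2, hIN b]
  rw [lhs_eq]
  -- the RHS computation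
  have hargs : ∀ u : ℝ, (z - u * Real.sqrt ((r:ℝ)/n)) / Real.sqrt (1 - (r:ℝ)/n)
      = (z * Real.sqrt n - Real.sqrt r * u) / Real.sqrt κ := by
    intro u
    exact CovAux.arg_eq n r hr hrn z u
  have hsqrt_rn : Real.sqrt ((r:ℝ)/n) = Real.sqrt r / Real.sqrt n :=
    Real.sqrt_div (by positivity) _
  have hΔ : ∀ u v : ℝ,
      (PhiN μ κ ((z - u * Real.sqrt ((r:ℝ)/n)) / Real.sqrt (1 - (r:ℝ)/n)) -
        PhiN μ κ ((z - v * Real.sqrt ((r:ℝ)/n)) / Real.sqrt (1 - (r:ℝ)/n)) +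
        pz * (u - v) * Real.sqrt ((r:ℝ)/n)) ^ 2 = (H u - H v)^2 := by
    intro u v
    rw [hargs u, hargs v, hsqrt_rn, hH]
    ring
  simp only [hΔ]
  -- facts about H
  have hφmeas : Measurable fun t : ℝ =>
      PhiN μ κ ((z * Real.sqrt n - Real.sqrt r * t) / Real.sqrt κ) :=
    (CovAux.PhiN_mono (μ := μ) κ).measurable.comp (by fun_prop)
  have hHmeas : Measurable H := by
    rw [hH]
    exact (hφmeas.sub measurable_const).add (by fun_prop)
  have hHmem : MemLp H 2 (normalizedSumLaw μ r) := by
    have e : H = (fun t => PhiN μ κ ((z * Real.sqrt n - Real.sqrt r * t) / Real.sqrt κ)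
        - PhiN μ n z) + fun t => (pz * Real.sqrt r / Real.sqrt n) * t := by
      funext t; rw [hH]; simp only [Pi.add_apply]; ring
    rw [e]
    refine MemLp.add ?_ ((CovAux.memL2_id_nu hvar r).const_mul _)
    refine MemLp.of_bound ((hφmeas.sub measurable_const).aestronglyMeasurable) 2
      (Filter.Eventually.of_forall fun t => ?_)
    rw [Real.norm_eq_abs]
    have h1 := CovAux.PhiN_nonneg (μ := μ) κ ((z * Real.sqrt n - Real.sqrt r * t) / Real.sqrt κ)
    have h2 := CovAux.PhiN_le_one (μ := μ) κ ((z * Real.sqrt n - Real.sqrt r * t) / Real.sqrt κ)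
    have h3 := CovAux.PhiN_nonneg (μ := μ) n z
    have h4 := CovAux.PhiN_le_one (μ := μ) n z
    rw [abs_le]; constructor <;> linarith
  have hHint : Integrable H (normalizedSumLaw μ r) := hHmem.integrable one_le_two
  have hHsq : Integrable (fun t => H t ^ 2) (normalizedSumLaw μ r) := hHmem.integrable_sq
  have hφint : Integrable (fun t : ℝ =>
      PhiN μ κ ((z * Real.sqrt n - Real.sqrt r * t) / Real.sqrt κ)) (normalizedSumLaw μ r) := by
    refine CovAux.integrable_bdd hφmeas.aestronglyMeasurable 1 fun t => ?_
    rw [abs_le]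
    refine ⟨?_, CovAux.PhiN_le_one _ _⟩
    have h0 := CovAux.PhiN_nonneg (μ := μ) κ ((z * Real.sqrt n - Real.sqrt r * t) / Real.sqrt κ)
    linarith
  have hintH : ∫ t, H t ∂(normalizedSumLaw μ r) = 0 := by
    have e : H = fun t =>
        PhiN μ κ ((z * Real.sqrt n - Real.sqrt r * t) / Real.sqrt κ)
          + ((pz * Real.sqrt r / Real.sqrt n) * t + (- PhiN μ n z)) := by
      funext t; rw [hH]; ring
    have i1 : Integrable (fun t : ℝ => (pz * Real.sqrt r / Real.sqrt n) * t
        + (- PhiN μ n z)) (normalizedSumLaw μ r) :=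
      ((CovAux.integrable_id_nu hvar r).const_mul _).add (integrable_const _)
    have i2 : Integrable (fun t : ℝ => (pz * Real.sqrt r / Real.sqrt n) * t)
        (normalizedSumLaw μ r) := (CovAux.integrable_id_nu hvar r).const_mul _
    rw [e, integral_add hφint i1, integral_add i2 (integrable_const _),
      integral_const_mul _ _, CovAux.integral_id_nu hmean hvar r, integral_const]
    have hconv := CovAux.phi_convolution (μ := μ) r κ hr hκ z
    rw [hrκ] at hconv
    rw [hconv]
    simp
  have hv : ∀ u : ℝ, ∫ v, (H u - H v)^2 ∂(normalizedSumLaw μ r)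
      = H u ^ 2 + ∫ t, H t ^ 2 ∂(normalizedSumLaw μ r) := by
    intro u
    have e : (fun v => (H u - H v)^2)
        = fun v => (H v ^ 2 + (-2 * H u) * H v) + H u ^ 2 := by
      funext v; ring
    have i1 : Integrable (fun v : ℝ => H v ^ 2 + (-2 * H u) * H v)
        (normalizedSumLaw μ r) := hHsq.add (hHint.const_mul _)
    have i2 : Integrable (fun v : ℝ => (-2 * H u) * H v) (normalizedSumLaw μ r) :=
      hHint.const_mul _
    rw [e, integral_add i1 (integrable_const _), integral_add hHsq i2,
      integral_const_mul _ _, hintH, integral_const]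
    simp only [measure_univ, ENNReal.toReal_one, probReal_univ, one_smul, smul_eq_mul, one_mul, mul_zero,
      add_zero, zero_add]
    ring
  simp only [hv]
  rw [integral_add hHsq (integrable_const _), integral_const]
  simp only [measure_univ, ENNReal.toReal_one, probReal_univ, one_smul, smul_eq_mul, one_mul]
  have : ∀ t : ℝ, H t * H t = H t ^ 2 := fun t => (sq (H t)).symm
  simp only [this]
  ring
end

section
/- There is an absolute constant C > 0 such that for every finite undirected simple graph G = (V, E) with E nonempty, the spin-overlap correlations satisfy Σ_{ω_1, ω_2 ∈ {−1,1}^V} ρ(ω_1, ω_2)⁴ ≤ C · 2^{2|V|} / |E|². -/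
open Finset
open scoped Classical

/-- The spin `±1` encoded by a Boolean. -/
def spinVal (b : Bool) : ℝ := if b then 1 else -1

/-- The product `σ(v₁)σ(v₂)` of the spins of the configuration `σ` at the two
endpoints of the edge `e = {v₁, v₂}`. -/
def edgeSpin {V : Type*} (σ : V → Bool) : Sym2 V → ℝ :=
  Sym2.lift ⟨fun a b => spinVal (σ a) * spinVal (σ b), fun a b => by ring⟩

/-- The spin-overlap correlation
`ρ(σ₁, σ₂) = |E|⁻¹ ∑_{e = {v₁,v₂} ∈ E} σ₁(v₁)σ₁(v₂)σ₂(v₁)σ₂(v₂)` of two spin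
configurations of the graph `G = (V, E)`; it is the covariance `E[X(σ₁)X(σ₂)]` of the
Gaussian spin-glass energies. -/
noncomputable def spinOverlap {V : Type*} (G : SimpleGraph V) (σ₁ σ₂ : V → Bool) : ℝ :=
  ((G.edgeSet.ncard : ℝ))⁻¹ * ∑ᶠ e ∈ G.edgeSet, edgeSpin σ₁ e * edgeSpin σ₂ e

/-! ### Auxiliary definitions and lemmas -/

/-- indicator of membership of a vertex in an edge -/
noncomputable def indE {V : Type*} (e : Sym2 V) (v : V) : ℕ := if v ∈ e then 1 else 0

lemma sym2_repr {V : Type*} (z : Sym2 V) : z = s(z.out.1, z.out.2) := by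
  exact z.out_eq.symm

lemma sym2_eq_of_mem_iff {V : Type*} {z w : Sym2 V} (hz : ¬z.IsDiag)
    (h : ∀ x, x ∈ z ↔ x ∈ w) : z = w := by
  obtain ⟨a, b, rfl⟩ : ∃ a b, z = s(a, b) := ⟨z.out.1, z.out.2, sym2_repr z⟩
  have hab : a ≠ b := by simpa [Sym2.mk_isDiag_iff] using hz
  exact ((Sym2.mem_and_mem_iff hab).1 ⟨(h a).1 (by simp), (h b).1 (by simp)⟩).symm

lemma even_cancel {V : Type*} {a b c d : Sym2 V}
    (h : ∀ v, Even (indE a v + indE b v + indE c v + indE d v))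
    (hab : a = b) (hc : ¬c.IsDiag) : c = d := by
  apply sym2_eq_of_mem_iff hc
  intro x
  have hx := h x
  subst hab
  rw [Nat.even_iff] at hx
  simp only [indE] at hx
  constructor
  · intro h3
    by_contra h4
    by_cases h1 : x ∈ a <;> simp [h1, h3, h4] at hx
  · intro h4
    by_contra h3
    by_cases h1 : x ∈ a <;> simp [h1, h3, h4] at hx

/-- no vertex lies in three of the edges, when they are suitably distinct -/
lemma no_three {V : Type*} {a b c d : Sym2 V}
    (h : ∀ v, Even (indE a v + indE b v + indE c v + indE d v))
    (hnd : ¬a.IsDiag) (hab : a ≠ b) (hac : a ≠ c) (had : a ≠ d)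
    (v : V) (h1 : v ∈ a) (h2 : v ∈ b) (h3 : v ∈ c) : False := by
  have h4 : v ∈ d := by
    by_contra h4
    have hx := h v
    rw [Nat.even_iff] at hx
    simp [indE, h1, h2, h3, h4] at hx
  set w := Sym2.Mem.other' h1 with hwdef
  have hwa : s(v, w) = a := Sym2.other_spec' h1
  have hvw : v ≠ w := by
    intro e
    apply hnd
    rw [← hwa, ← e]
    exact Sym2.mk_isDiag_iff.mpr rfl
  have hwinA : w ∈ a := by rw [← hwa]; simp
  have hwb : w ∉ b := fun hwb => hab (hwa.symm.trans ((Sym2.mem_and_mem_iff hvw).1 ⟨h2, hwb⟩).symm)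
  have hwc : w ∉ c := fun hwc => hac (hwa.symm.trans ((Sym2.mem_and_mem_iff hvw).1 ⟨h3, hwc⟩).symm)
  have hwd : w ∉ d := fun hwd => had (hwa.symm.trans ((Sym2.mem_and_mem_iff hvw).1 ⟨h4, hwd⟩).symm)
  have hx := h w
  rw [Nat.even_iff] at hx
  simp [indE, hwinA, hwb, hwc, hwd] at hx

/-- a vertex of `e1` lies in at least one of the other edges -/
lemma at_least {V : Type*} {e1 e2 e3 e4 : Sym2 V}
    (h : ∀ v, Even (indE e1 v + indE e2 v + indE e3 v + indE e4 v))
    {v : V} (hv : v ∈ e1) : v ∈ e2 ∨ v ∈ e3 ∨ v ∈ e4 := by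
  by_contra hcon
  push_neg at hcon
  have hx := h v
  rw [Nat.even_iff] at hx
  simp [indE, hv, hcon.1, hcon.2.1, hcon.2.2] at hx

/-- a vertex of `e1` lies in exactly one of the other edges -/
lemma exact_one {V : Type*} {e1 e2 e3 e4 : Sym2 V}
    (h : ∀ v, Even (indE e1 v + indE e2 v + indE e3 v + indE e4 v))
    (hnd2 : ¬e2.IsDiag) (d12 : e1 ≠ e2) (d23 : e2 ≠ e3) (d24 : e2 ≠ e4)
    {v : V} (hv : v ∈ e1) :
    (v ∈ e2 ∧ v ∉ e3 ∧ v ∉ e4) ∨ (v ∉ e2 ∧ v ∈ e3 ∧ v ∉ e4) ∨ (v ∉ e2 ∧ v ∉ e3 ∧ v ∈ e4) := by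
  have hperm : ∀ w, Even (indE e2 w + indE e3 w + indE e4 w + indE e1 w) := by
    intro w
    have := h w
    rw [Nat.even_iff] at *
    omega
  have hx := h v
  rw [Nat.even_iff] at hx
  by_cases h2 : v ∈ e2 <;> by_cases h3 : v ∈ e3 <;> by_cases h4 : v ∈ e4
  · exact absurd h2 (fun _ => no_three hperm hnd2 d23 d24 d12.symm v h2 h3 h4)
  · simp [indE, hv, h2, h3, h4] at hx
  · simp [indE, hv, h2, h3, h4] at hx
  · tauto
  · simp [indE, hv, h2, h3, h4] at hx
  · tauto
  · tauto
  · simp [indE, hv, h2, h3, h4] at hx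

/-- the four-element set of edges with one endpoint in `e` and one in `f` -/
noncomputable def crossSet {V : Type*} (e f : Sym2 V) : Finset (Sym2 V) :=
  {s(e.out.1, f.out.1), s(e.out.1, f.out.2), s(e.out.2, f.out.1), s(e.out.2, f.out.2)}

lemma card_crossSet_le {V : Type*} (e f : Sym2 V) :
    (insert f (crossSet e f)).card ≤ 5 := by
  refine (Finset.card_insert_le _ _).trans ?_
  have : (crossSet e f).card ≤ 4 := by
    unfold crossSet
    refine (Finset.card_insert_le _ _).trans ?_
    refine Nat.succ_le_succ ((Finset.card_insert_le _ _).trans ?_)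
    refine Nat.succ_le_succ ((Finset.card_insert_le _ _).trans ?_)
    simp
  omega

lemma mem_crossSet {V : Type*} {p q : V} {e f : Sym2 V} (hp : p ∈ e) (hq : q ∈ f) :
    s(p, q) ∈ crossSet e f := by
  rw [sym2_repr e, Sym2.mem_iff] at hp
  rw [sym2_repr f, Sym2.mem_iff] at hq
  rcases hp with rfl | rfl <;> rcases hq with rfl | rfl <;> simp [crossSet]

/-- In the all-distinct case there is an edge among `e2,e3,e4` disjoint from `e1`. -/
lemma opp_exists {V : Type*} {e1 e2 e3 e4 : Sym2 V}
    (h : ∀ v, Even (indE e1 v + indE e2 v + indE e3 v + indE e4 v))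
    (hnd1 : ¬e1.IsDiag) (hnd2 : ¬e2.IsDiag) (hnd3 : ¬e3.IsDiag) (hnd4 : ¬e4.IsDiag)
    (d12 : e1 ≠ e2) (d13 : e1 ≠ e3) (d14 : e1 ≠ e4)
    (d23 : e2 ≠ e3) (d24 : e2 ≠ e4) (d34 : e3 ≠ e4) :
    (∀ v ∈ e1, v ∉ e2) ∨ (∀ v ∈ e1, v ∉ e3) ∨ (∀ v ∈ e1, v ∉ e4) := by
  obtain ⟨a, b, he1⟩ : ∃ a b, e1 = s(a, b) := ⟨e1.out.1, e1.out.2, sym2_repr e1⟩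
  have hab : a ≠ b := by rw [he1] at hnd1; simpa [Sym2.mk_isDiag_iff] using hnd1
  have haIn : a ∈ e1 := by rw [he1]; simp
  have hbIn : b ∈ e1 := by rw [he1]; simp
  have hmem : ∀ v ∈ e1, v = a ∨ v = b := by
    intro v hv; rw [he1, Sym2.mem_iff] at hv; exact hv
  have ha := exact_one h hnd2 d12 d23 d24 haIn
  have hb := exact_one h hnd2 d12 d23 d24 hbIn
  have same_edge : ∀ {g : Sym2 V}, a ∈ g → b ∈ g → g = e1 := by
    intro g hga hgb
    rw [he1]
    exact (Sym2.mem_and_mem_iff hab).1 ⟨hga, hgb⟩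
  rcases ha with ⟨a2, a3, a4⟩ | ⟨a2, a3, a4⟩ | ⟨a2, a3, a4⟩ <;>
    rcases hb with ⟨b2, b3, b4⟩ | ⟨b2, b3, b4⟩ | ⟨b2, b3, b4⟩
  · exact absurd (same_edge a2 b2) d12.symm
  · refine Or.inr (Or.inr ?_); intro v hv; rcases hmem v hv with rfl | rfl; exact a4; exact b4
  · refine Or.inr (Or.inl ?_); intro v hv; rcases hmem v hv with rfl | rfl; exact a3; exact b3
  · refine Or.inr (Or.inr ?_); intro v hv; rcases hmem v hv with rfl | rfl; exact a4; exact b4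
  · exact absurd (same_edge a3 b3) d13.symm
  · refine Or.inl ?_; intro v hv; rcases hmem v hv with rfl | rfl; exact a2; exact b2
  · refine Or.inr (Or.inl ?_); intro v hv; rcases hmem v hv with rfl | rfl; exact a3; exact b3
  · refine Or.inl ?_; intro v hv; rcases hmem v hv with rfl | rfl; exact a2; exact b2
  · exact absurd (same_edge a4 b4) d14.symm

/-- In the all-distinct case with `e1, e4` disjoint, `e2` is a "cross" edge. -/
lemma cross_mem' {V : Type*} {e1 e2 e3 e4 : Sym2 V}
    (h : ∀ v, Even (indE e1 v + indE e2 v + indE e3 v + indE e4 v))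
    (hnd1 : ¬e1.IsDiag) (hnd4 : ¬e4.IsDiag)
    (d13 : e1 ≠ e3) (d34 : e3 ≠ e4)
    (hdisj : ∀ v ∈ e1, v ∉ e4) :
    e2 ∈ crossSet e1 e4 := by
  obtain ⟨a, b, he1⟩ : ∃ a b, e1 = s(a, b) := ⟨e1.out.1, e1.out.2, sym2_repr e1⟩
  have hab : a ≠ b := by rw [he1] at hnd1; simpa [Sym2.mk_isDiag_iff] using hnd1
  have haIn : a ∈ e1 := by rw [he1]; simp
  have hbIn : b ∈ e1 := by rw [he1]; simp
  obtain ⟨x, y, he4⟩ : ∃ x y, e4 = s(x, y) := ⟨e4.out.1, e4.out.2, sym2_repr e4⟩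
  have hxy : x ≠ y := by rw [he4] at hnd4; simpa [Sym2.mk_isDiag_iff] using hnd4
  have hxIn : x ∈ e4 := by rw [he4]; simp
  have hyIn : y ∈ e4 := by rw [he4]; simp
  have hp : ∃ p, p ∈ e1 ∧ p ∈ e2 := by
    rcases at_least h haIn with h' | h' | h'
    · exact ⟨a, haIn, h'⟩
    · rcases at_least h hbIn with h'' | h'' | h''
      · exact ⟨b, hbIn, h''⟩
      · exact absurd ((Sym2.mem_and_mem_iff hab).1 ⟨h', h''⟩).symm (by rw [← he1]; exact d13)
      · exact absurd h'' (hdisj b hbIn)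
    · exact absurd h' (hdisj a haIn)
  have hperm : ∀ v, Even (indE e4 v + indE e2 v + indE e3 v + indE e1 v) := by
    intro v; have := h v; rw [Nat.even_iff] at *; omega
  have hdisj' : ∀ v ∈ e4, v ∉ e1 := fun v hv hv1 => hdisj v hv1 hv
  have hq : ∃ q, q ∈ e4 ∧ q ∈ e2 := by
    rcases at_least hperm hxIn with h' | h' | h'
    · exact ⟨x, hxIn, h'⟩
    · rcases at_least hperm hyIn with h'' | h'' | h''
      · exact ⟨y, hyIn, h''⟩
      · exact absurd ((Sym2.mem_and_mem_iff hxy).1 ⟨h', h''⟩).symm (by rw [← he4]; exact d34.symm)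
      · exact absurd h'' (hdisj' y hyIn)
    · exact absurd h' (hdisj' x hxIn)
  obtain ⟨p, hp1, hp2⟩ := hp
  obtain ⟨q, hq4, hq2⟩ := hq
  have hpq : p ≠ q := fun e => hdisj p hp1 (e ▸ hq4)
  have : e2 = s(p, q) := (Sym2.mem_and_mem_iff hpq).1 ⟨hp2, hq2⟩
  rw [this]
  exact mem_crossSet hp1 hq4

lemma edgeSpin_eq_prod {V : Type*} [Fintype V] (σ : V → Bool) {e : Sym2 V} (he : ¬e.IsDiag) :
    edgeSpin σ e = ∏ v : V, spinVal (σ v) ^ indE e v := by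
  obtain ⟨a, b, rfl⟩ : ∃ a b, e = s(a, b) := ⟨e.out.1, e.out.2, sym2_repr e⟩
  have hab : a ≠ b := by simpa [Sym2.mk_isDiag_iff] using he
  have h1 : ∀ v : V, spinVal (σ v) ^ indE (s(a,b)) v
      = if v = a ∨ v = b then spinVal (σ v) else 1 := by
    intro v
    by_cases hv : v = a ∨ v = b <;> simp [indE, hv, Sym2.mem_iff]
  rw [Finset.prod_congr rfl (fun v _ => h1 v), ← Finset.prod_filter]
  have hfil : (Finset.univ.filter (fun v => v = a ∨ v = b)) = {a, b} := by
    ext v; simp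
  rw [hfil, Finset.prod_pair hab]
  rfl

lemma sum_spin_eval {V : Type*} [Fintype V] {e1 e2 e3 e4 : Sym2 V}
    (h1 : ¬e1.IsDiag) (h2 : ¬e2.IsDiag) (h3 : ¬e3.IsDiag) (h4 : ¬e4.IsDiag) :
    ∑ σ : V → Bool, edgeSpin σ e1 * edgeSpin σ e2 * (edgeSpin σ e3 * edgeSpin σ e4)
      = if (∀ v, Even (indE e1 v + indE e2 v + indE e3 v + indE e4 v))
          then (2:ℝ) ^ Fintype.card V else 0 := by
  have hterm : ∀ σ : V → Bool,
      edgeSpin σ e1 * edgeSpin σ e2 * (edgeSpin σ e3 * edgeSpin σ e4)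
        = ∏ v : V, spinVal (σ v) ^ (indE e1 v + indE e2 v + indE e3 v + indE e4 v) := by
    intro σ
    rw [edgeSpin_eq_prod σ h1, edgeSpin_eq_prod σ h2, edgeSpin_eq_prod σ h3,
      edgeSpin_eq_prod σ h4, ← Finset.prod_mul_distrib, ← Finset.prod_mul_distrib,
      ← Finset.prod_mul_distrib]
    exact Finset.prod_congr rfl fun v _ => by rw [← pow_add, ← pow_add, ← pow_add]; ring_nf
  simp only [hterm]
  rw [← Fintype.piFinset_univ, ← Finset.prod_univ_sum (fun _ => (Finset.univ : Finset Bool))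
    (fun v b => spinVal b ^ (indE e1 v + indE e2 v + indE e3 v + indE e4 v))]
  have hfac : ∀ v : V, (∑ b : Bool, spinVal b ^ (indE e1 v + indE e2 v + indE e3 v + indE e4 v))
      = if Even (indE e1 v + indE e2 v + indE e3 v + indE e4 v) then (2:ℝ) else 0 := by
    intro v
    rw [Fintype.sum_bool]
    by_cases hev : Even (indE e1 v + indE e2 v + indE e3 v + indE e4 v)
    · simp [spinVal, hev, Even.neg_one_pow hev]
      norm_num
    · simp [spinVal, Odd.neg_one_pow (Nat.not_even_iff_odd.mp hev), hev]
  rw [Finset.prod_congr rfl fun v _ => hfac v]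
  by_cases hall : ∀ v, Even (indE e1 v + indE e2 v + indE e3 v + indE e4 v)
  · rw [if_pos hall, Finset.prod_congr rfl fun v _ => if_pos (hall v), Finset.prod_const,
      Finset.card_univ]
  · rw [if_neg hall]
    push_neg at hall
    obtain ⟨v, hv⟩ := hall
    exact Finset.prod_eq_zero (Finset.mem_univ v) (by simp [hv])

lemma count_le {V : Type*} [Fintype V] (G : SimpleGraph V) [Fintype G.edgeSet] :
    (((G.edgeFinset ×ˢ G.edgeFinset) ×ˢ (G.edgeFinset ×ˢ G.edgeFinset)).filter
       (fun q => ∀ v, Even (indE q.1.1 v + indE q.1.2 v + indE q.2.1 v + indE q.2.2 v))).card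
    ≤ 128 * G.edgeFinset.card ^ 2 := by
  set E := G.edgeFinset with hE
  set Q : Finset ((Sym2 V × Sym2 V) × (Sym2 V × Sym2 V)) := (E ×ˢ E) ×ˢ (E ×ˢ E) with hQ
  set A1 := Q.filter (fun q => q.1.1 = q.1.2 ∧ q.2.1 = q.2.2) with hA1def
  set A2 := Q.filter (fun q => q.1.1 = q.2.1 ∧ q.1.2 = q.2.2) with hA2def
  set A3 := Q.filter (fun q => q.1.1 = q.2.2 ∧ q.1.2 = q.2.1) with hA3def
  set B := (E ×ˢ E).biUnion (fun ef =>
    (({ef.1} : Finset (Sym2 V)) ×ˢ insert ef.2 (crossSet ef.1 ef.2)) ×ˢ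
      (insert ef.2 (crossSet ef.1 ef.2) ×ˢ insert ef.2 (crossSet ef.1 ef.2))) with hBdef
  have hsub : Q.filter
      (fun q => ∀ v, Even (indE q.1.1 v + indE q.1.2 v + indE q.2.1 v + indE q.2.2 v))
      ⊆ A1 ∪ A2 ∪ A3 ∪ B := by
    intro q hq
    rw [mem_filter] at hq
    obtain ⟨hqQ, heven⟩ := hq
    obtain ⟨⟨e1, e2⟩, e3, e4⟩ := q
    simp only [] at heven
    have hmem := hqQ
    rw [hQ, mem_product, mem_product, mem_product] at hmem
    obtain ⟨⟨he1, he2⟩, he3, he4⟩ := hmem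
    have nd1 : ¬e1.IsDiag := G.not_isDiag_of_mem_edgeSet (SimpleGraph.mem_edgeFinset.1 he1)
    have nd2 : ¬e2.IsDiag := G.not_isDiag_of_mem_edgeSet (SimpleGraph.mem_edgeFinset.1 he2)
    have nd3 : ¬e3.IsDiag := G.not_isDiag_of_mem_edgeSet (SimpleGraph.mem_edgeFinset.1 he3)
    have nd4 : ¬e4.IsDiag := G.not_isDiag_of_mem_edgeSet (SimpleGraph.mem_edgeFinset.1 he4)
    have perm : ∀ (a b c d : Sym2 V),
        (∀ v, indE a v + indE b v + indE c v + indE d v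
            = indE e1 v + indE e2 v + indE e3 v + indE e4 v) →
        ∀ v, Even (indE a v + indE b v + indE c v + indE d v) := by
      intro a b c d hperm v
      rw [hperm v]; exact heven v
    by_cases c12 : e1 = e2
    · have c34 : e3 = e4 := even_cancel heven c12 nd3
      exact mem_union_left _ (mem_union_left _ (mem_union_left _
        (mem_filter.2 ⟨hqQ, c12, c34⟩)))
    by_cases c13 : e1 = e3
    · have c24 : e2 = e4 := even_cancel (perm e1 e3 e2 e4 (fun v => by ring)) c13 nd2
      exact mem_union_left _ (mem_union_left _ (mem_union_right _
        (mem_filter.2 ⟨hqQ, c13, c24⟩)))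
    by_cases c14 : e1 = e4
    · have c23 : e2 = e3 := even_cancel (perm e1 e4 e2 e3 (fun v => by ring)) c14 nd2
      exact mem_union_left _ (mem_union_right _ (mem_filter.2 ⟨hqQ, c14, c23⟩))
    have c23 : e2 ≠ e3 := fun h =>
      c14 (even_cancel (perm e2 e3 e1 e4 (fun v => by ring)) h nd1)
    have c24 : e2 ≠ e4 := fun h =>
      c13 (even_cancel (perm e2 e4 e1 e3 (fun v => by ring)) h nd1)
    have c34 : e3 ≠ e4 := fun h =>
      c12 (even_cancel (perm e3 e4 e1 e2 (fun v => by ring)) h nd1)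
    apply mem_union_right
    rw [hBdef, mem_biUnion]
    rcases opp_exists heven nd1 nd2 nd3 nd4 c12 c13 c14 c23 c24 c34 with hd | hd | hd
    · refine ⟨(e1, e2), mem_product.2 ⟨he1, he2⟩, ?_⟩
      have m3 : e3 ∈ insert e2 (crossSet e1 e2) := mem_insert_of_mem
        (cross_mem' (perm e1 e3 e4 e2 (fun v => by ring)) nd1 nd2 c14 c24.symm hd)
      have m4 : e4 ∈ insert e2 (crossSet e1 e2) := mem_insert_of_mem
        (cross_mem' (perm e1 e4 e3 e2 (fun v => by ring)) nd1 nd2 c13 c23.symm hd)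
      exact mem_product.2 ⟨mem_product.2 ⟨mem_singleton_self e1, mem_insert_self e2 _⟩,
        mem_product.2 ⟨m3, m4⟩⟩
    · refine ⟨(e1, e3), mem_product.2 ⟨he1, he3⟩, ?_⟩
      have m2 : e2 ∈ insert e3 (crossSet e1 e3) := mem_insert_of_mem
        (cross_mem' (perm e1 e2 e4 e3 (fun v => by ring)) nd1 nd3 c14 c34.symm hd)
      have m4 : e4 ∈ insert e3 (crossSet e1 e3) := mem_insert_of_mem
        (cross_mem' (perm e1 e4 e2 e3 (fun v => by ring)) nd1 nd3 c12 c23 hd)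
      exact mem_product.2 ⟨mem_product.2 ⟨mem_singleton_self e1, m2⟩,
        mem_product.2 ⟨mem_insert_self e3 _, m4⟩⟩
    · refine ⟨(e1, e4), mem_product.2 ⟨he1, he4⟩, ?_⟩
      have m2 : e2 ∈ insert e4 (crossSet e1 e4) := mem_insert_of_mem
        (cross_mem' heven nd1 nd4 c13 c34 hd)
      have m3 : e3 ∈ insert e4 (crossSet e1 e4) := mem_insert_of_mem
        (cross_mem' (perm e1 e3 e2 e4 (fun v => by ring)) nd1 nd4 c12 c24 hd)
      exact mem_product.2 ⟨mem_product.2 ⟨mem_singleton_self e1, m2⟩,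
        mem_product.2 ⟨m3, mem_insert_self e4 _⟩⟩
  have hA1 : A1.card ≤ E.card * E.card := by
    have h : A1 ⊆ (E ×ˢ E).image (fun ef : Sym2 V × Sym2 V => ((ef.1, ef.1), (ef.2, ef.2))) := by
      intro q hq
      rw [hA1def, mem_filter] at hq
      obtain ⟨hqQ, h1, h2⟩ := hq
      rw [hQ, mem_product, mem_product, mem_product] at hqQ
      refine mem_image.2 ⟨(q.1.1, q.2.1), mem_product.2 ⟨hqQ.1.1, hqQ.2.1⟩, ?_⟩
      ext <;> simp [h1.symm, h2.symm]
    exact (card_le_card h).trans (card_image_le.trans (le_of_eq (card_product _ _)))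
  have hA2 : A2.card ≤ E.card * E.card := by
    have h : A2 ⊆ (E ×ˢ E).image (fun ef : Sym2 V × Sym2 V => ((ef.1, ef.2), (ef.1, ef.2))) := by
      intro q hq
      rw [hA2def, mem_filter] at hq
      obtain ⟨hqQ, h1, h2⟩ := hq
      rw [hQ, mem_product, mem_product, mem_product] at hqQ
      refine mem_image.2 ⟨(q.1.1, q.1.2), mem_product.2 ⟨hqQ.1.1, hqQ.1.2⟩, ?_⟩
      ext <;> simp [h1.symm, h2.symm]
    exact (card_le_card h).trans (card_image_le.trans (le_of_eq (card_product _ _)))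
  have hA3 : A3.card ≤ E.card * E.card := by
    have h : A3 ⊆ (E ×ˢ E).image (fun ef : Sym2 V × Sym2 V => ((ef.1, ef.2), (ef.2, ef.1))) := by
      intro q hq
      rw [hA3def, mem_filter] at hq
      obtain ⟨hqQ, h1, h2⟩ := hq
      rw [hQ, mem_product, mem_product, mem_product] at hqQ
      refine mem_image.2 ⟨(q.1.1, q.1.2), mem_product.2 ⟨hqQ.1.1, hqQ.1.2⟩, ?_⟩
      ext <;> simp [h1.symm, h2.symm]
    exact (card_le_card h).trans (card_image_le.trans (le_of_eq (card_product _ _)))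
  have hB : B.card ≤ 125 * (E.card * E.card) := by
    refine card_biUnion_le.trans ?_
    calc ∑ ef ∈ E ×ˢ E, ((({ef.1} : Finset (Sym2 V)) ×ˢ insert ef.2 (crossSet ef.1 ef.2)) ×ˢ
          (insert ef.2 (crossSet ef.1 ef.2) ×ˢ insert ef.2 (crossSet ef.1 ef.2))).card
        ≤ ∑ _ef ∈ E ×ˢ E, 125 := by
          refine sum_le_sum fun ef _ => ?_
          rw [card_product, card_product, card_product, card_singleton]
          have h5 := card_crossSet_le ef.1 ef.2
          calc 1 * (insert ef.2 (crossSet ef.1 ef.2)).card *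
                ((insert ef.2 (crossSet ef.1 ef.2)).card * (insert ef.2 (crossSet ef.1 ef.2)).card)
              ≤ 1 * 5 * (5 * 5) := by
                exact Nat.mul_le_mul (Nat.mul_le_mul le_rfl h5) (Nat.mul_le_mul h5 h5)
            _ = 125 := by norm_num
      _ = 125 * (E.card * E.card) := by
          rw [sum_const, card_product, smul_eq_mul, mul_comm]
  calc (Q.filter _).card ≤ (A1 ∪ A2 ∪ A3 ∪ B).card := card_le_card hsub
    _ ≤ A1.card + A2.card + A3.card + B.card := by
        refine (card_union_le _ _).trans ?_
        refine Nat.add_le_add_right ((card_union_le _ _).trans ?_) _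
        exact Nat.add_le_add_right (card_union_le _ _) _
    _ ≤ 128 * E.card ^ 2 := by
        rw [sq]
        omega

/-- **Fourth-moment bound for spin-overlap correlations.**
There is an absolute constant `C > 0` such that for every finite undirected simple
graph `G = (V, E)` with `E` nonempty,
`∑_{σ₁, σ₂ ∈ {-1,1}^V} ρ(σ₁, σ₂)⁴ ≤ C · 2^{2|V|} / |E|²`. -/
theorem spin_overlap_fourth_moment_bound :
    ∃ C : ℝ, 0 < C ∧ ∀ (V : Type) [Fintype V] (G : SimpleGraph V),
      G.edgeSet.Nonempty →
      ∑ σ₁ : V → Bool, ∑ σ₂ : V → Bool, spinOverlap G σ₁ σ₂ ^ 4 ≤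
        C * 2 ^ (2 * Fintype.card V) / (G.edgeSet.ncard : ℝ) ^ 2 := by
  refine ⟨128, by norm_num, ?_⟩
  intro V _ G hne
  haveI : Fintype ↑G.edgeSet := Set.Finite.fintype (Set.toFinite _)
  set E := G.edgeFinset with hEdef
  set m := E.card with hmdef
  set n := Fintype.card V with hndef
  have hmcard : G.edgeSet.ncard = m := by
    rw [← SimpleGraph.coe_edgeFinset, Set.ncard_coe_finset]
  have hm0 : 0 < m := Finset.card_pos.2 (by
    rwa [← SimpleGraph.coe_edgeFinset, Finset.coe_nonempty] at hne)
  have hmR : (0:ℝ) < (m:ℝ) := by exact_mod_cast hm0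
  have hρ : ∀ σ₁ σ₂ : V → Bool, spinOverlap G σ₁ σ₂
      = ((m:ℝ))⁻¹ * ∑ e ∈ E, edgeSpin σ₁ e * edgeSpin σ₂ e := by
    intro σ₁ σ₂
    simp only [spinOverlap]
    rw [hmcard, ← SimpleGraph.coe_edgeFinset, finsum_mem_coe_finset]
  set Q : Finset ((Sym2 V × Sym2 V) × (Sym2 V × Sym2 V)) := (E ×ˢ E) ×ˢ (E ×ˢ E) with hQ
  have quad_expand : ∀ x : Sym2 V → ℝ, (∑ e ∈ E, x e) ^ 4
      = ∑ P ∈ Q, x P.1.1 * x P.1.2 * (x P.2.1 * x P.2.2) := by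
    intro x
    have h2 : ∑ p ∈ E ×ˢ E, x p.1 * x p.2 = (∑ e ∈ E, x e) * (∑ e ∈ E, x e) := by
      rw [Finset.sum_product, ← Finset.sum_mul_sum]
    calc (∑ e ∈ E, x e) ^ 4
        = (∑ p ∈ E ×ˢ E, x p.1 * x p.2) * (∑ r ∈ E ×ˢ E, x r.1 * x r.2) := by
          rw [h2]; ring
      _ = ∑ p ∈ E ×ˢ E, ∑ r ∈ E ×ˢ E, x p.1 * x p.2 * (x r.1 * x r.2) :=
          Finset.sum_mul_sum _ _ _ _
      _ = ∑ P ∈ Q, x P.1.1 * x P.1.2 * (x P.2.1 * x P.2.2) := by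
          rw [hQ]
          exact (Finset.sum_product (E ×ˢ E) (E ×ˢ E)
            (fun P => x P.1.1 * x P.1.2 * (x P.2.1 * x P.2.2))).symm
  have step1 : ∑ σ₁ : V → Bool, ∑ σ₂ : V → Bool, spinOverlap G σ₁ σ₂ ^ 4
      = ((m:ℝ))⁻¹ ^ 4 * ∑ P ∈ Q,
          (∑ σ : V → Bool,
            edgeSpin σ P.1.1 * edgeSpin σ P.1.2 * (edgeSpin σ P.2.1 * edgeSpin σ P.2.2)) ^ 2 := by
    have hterm : ∀ σ₁ σ₂ : V → Bool, spinOverlap G σ₁ σ₂ ^ 4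
        = ((m:ℝ))⁻¹ ^ 4 * ∑ P ∈ Q,
            (edgeSpin σ₁ P.1.1 * edgeSpin σ₁ P.1.2 * (edgeSpin σ₁ P.2.1 * edgeSpin σ₁ P.2.2)) *
            (edgeSpin σ₂ P.1.1 * edgeSpin σ₂ P.1.2 * (edgeSpin σ₂ P.2.1 * edgeSpin σ₂ P.2.2)) := by
      intro σ₁ σ₂
      rw [hρ, mul_pow, quad_expand (fun e => edgeSpin σ₁ e * edgeSpin σ₂ e)]
      congr 1
      exact Finset.sum_congr rfl fun P _ => by ring
    simp only [hterm, ← Finset.mul_sum]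
    congr 1
    calc ∑ σ₁ : V → Bool, ∑ σ₂ : V → Bool, ∑ P ∈ Q,
            (edgeSpin σ₁ P.1.1 * edgeSpin σ₁ P.1.2 * (edgeSpin σ₁ P.2.1 * edgeSpin σ₁ P.2.2)) *
            (edgeSpin σ₂ P.1.1 * edgeSpin σ₂ P.1.2 * (edgeSpin σ₂ P.2.1 * edgeSpin σ₂ P.2.2))
        = ∑ σ₁ : V → Bool, ∑ P ∈ Q, ∑ σ₂ : V → Bool,
            (edgeSpin σ₁ P.1.1 * edgeSpin σ₁ P.1.2 * (edgeSpin σ₁ P.2.1 * edgeSpin σ₁ P.2.2)) *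
            (edgeSpin σ₂ P.1.1 * edgeSpin σ₂ P.1.2 * (edgeSpin σ₂ P.2.1 * edgeSpin σ₂ P.2.2)) :=
          Finset.sum_congr rfl fun σ₁ _ => Finset.sum_comm
      _ = ∑ P ∈ Q, ∑ σ₁ : V → Bool, ∑ σ₂ : V → Bool,
            (edgeSpin σ₁ P.1.1 * edgeSpin σ₁ P.1.2 * (edgeSpin σ₁ P.2.1 * edgeSpin σ₁ P.2.2)) *
            (edgeSpin σ₂ P.1.1 * edgeSpin σ₂ P.1.2 * (edgeSpin σ₂ P.2.1 * edgeSpin σ₂ P.2.2)) :=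
          Finset.sum_comm
      _ = ∑ P ∈ Q, (∑ σ : V → Bool,
            edgeSpin σ P.1.1 * edgeSpin σ P.1.2 * (edgeSpin σ P.2.1 * edgeSpin σ P.2.2)) ^ 2 :=
          Finset.sum_congr rfl fun P _ => by rw [sq, Finset.sum_mul_sum]
  rw [hmcard, step1]
  have hval : ∀ P ∈ Q, (∑ σ : V → Bool,
      edgeSpin σ P.1.1 * edgeSpin σ P.1.2 * (edgeSpin σ P.2.1 * edgeSpin σ P.2.2)) ^ 2
      = if (∀ v, Even (indE P.1.1 v + indE P.1.2 v + indE P.2.1 v + indE P.2.2 v))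
          then ((2:ℝ) ^ n) ^ 2 else 0 := by
    intro P hP
    rw [hQ, mem_product, mem_product, mem_product] at hP
    have nd1 := G.not_isDiag_of_mem_edgeSet (SimpleGraph.mem_edgeFinset.1 hP.1.1)
    have nd2 := G.not_isDiag_of_mem_edgeSet (SimpleGraph.mem_edgeFinset.1 hP.1.2)
    have nd3 := G.not_isDiag_of_mem_edgeSet (SimpleGraph.mem_edgeFinset.1 hP.2.1)
    have nd4 := G.not_isDiag_of_mem_edgeSet (SimpleGraph.mem_edgeFinset.1 hP.2.2)
    rw [sum_spin_eval nd1 nd2 nd3 nd4]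
    split_ifs
    · rfl
    · exact zero_pow two_ne_zero
  rw [Finset.sum_congr rfl hval, ← Finset.sum_filter, Finset.sum_const, nsmul_eq_mul]
  have hcount : ((Q.filter (fun q => ∀ v,
      Even (indE q.1.1 v + indE q.1.2 v + indE q.2.1 v + indE q.2.2 v))).card : ℝ)
      ≤ 128 * (m:ℝ) ^ 2 := by
    exact_mod_cast count_le G
  calc ((m:ℝ))⁻¹ ^ 4 * (((Q.filter (fun q => ∀ v,
          Even (indE q.1.1 v + indE q.1.2 v + indE q.2.1 v + indE q.2.2 v))).card : ℝ)
          * ((2:ℝ) ^ n) ^ 2)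
      ≤ ((m:ℝ))⁻¹ ^ 4 * ((128 * (m:ℝ) ^ 2) * ((2:ℝ) ^ n) ^ 2) :=
        mul_le_mul_of_nonneg_left
          (mul_le_mul_of_nonneg_right hcount (by positivity)) (by positivity)
    _ = 128 * 2 ^ (2 * n) / (m:ℝ) ^ 2 := by
        have h2n : ((2:ℝ) ^ n) ^ 2 = 2 ^ (2 * n) := by rw [← pow_mul, mul_comm]
        rw [h2n]
        field_simp
end
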